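/- Let α>0, p∈(0,1), let r be the nonnegative integer with 0 < α−r ≤ 1, let n≥1 be an integer, and let ε∈(0,1) satisfy ε(1 + n/(α−r)) < 1. Then for every set partition 𝒜 of {1,…,n} (with number of blocks t ≤ n), Pr_{ε,n}(𝒜) ≤ (1 + α(1−p)ε)^n · (1 + ((1−p)/p) ε² (1 + n/(α−r))^{3+r})^n · (1 + ((1−p)/p) ε (1 + n/(α−r))^{2+r}) · Pr_{0,n}(𝒜). -/

import Mathlib

open MeasureTheory

/-- The Beta function `B(a,b) = ∫_0^1 x^(a-1) (1-x)^(b-1) dx`. -/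
noncomputable def betaFun (a b : ℝ) : ℝ :=
  ∫ x in (0:ℝ)..1, x ^ (a - 1) * (1 - x) ^ (b - 1)

/-- The regularized incomplete Beta function
`I_ε(a,b) = (1/B(a,b)) ∫_0^ε x^(a-1) (1-x)^(b-1) dx`. -/
noncomputable def incBeta (ε a b : ℝ) : ℝ :=
  (∫ x in (0:ℝ)..ε, x ^ (a - 1) * (1 - x) ^ (b - 1)) / betaFun a b

/-- `P` is a set partition of `{1,…,n}` (modelled as `Fin n`): the blocks are non-empty and
every point lies in exactly one block. -/
def IsSetPartition (n : ℕ) (P : Finset (Finset (Fin n))) : Prop :=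
  (∅ ∉ P) ∧ ∀ i : Fin n, ∃! A : Finset (Fin n), A ∈ P ∧ i ∈ A

/-- The type of set partitions of `{1,…,n}`. -/
def SetPartition (n : ℕ) := {P : Finset (Finset (Fin n)) // IsSetPartition n P}

noncomputable instance (n : ℕ) : Fintype (SetPartition n) := by
  unfold SetPartition; exact Fintype.ofFinite _

/-- An enumeration of the blocks of a finite family of blocks by `Fin t`, `t` the number of
blocks. -/
noncomputable def blockEnum {n : ℕ} (P : Finset (Finset (Fin n))) :
    Fin P.card → Finset (Fin n) :=
  fun j => ((Fintype.equivFinOfCardEq (Fintype.card_coe P)).symm j : Finset (Fin n))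

/-- The sizes `n_1, …, n_t` of the blocks of a set partition `P` with `t = P.1.card` blocks. -/
noncomputable def blockSize {n : ℕ} (P : SetPartition n) : Fin P.1.card → ℕ :=
  fun j => (blockEnum P.1 j).card

/-- The exchangeable partition probability function of the quasi-Bernoulli stick-breaking
process with parameters `α`, `p`, `ε ∈ (0,1)`, evaluated on a partition of `n` points into `t`
blocks of sizes `ns 1, …, ns t`:
`(α^t Γ(α)/Γ(n+α)) (∏_j n_j!) Σ_{σ∈S_t} ∏_j [p+(1-p) I_ε(g_{j+1}(σ)+α, n_{σ_j}+1)/ε^α]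
  / [g_j(σ)+α(1-p)(1-ε^{g_j(σ)})]` where `g_j(σ) = Σ_{l=j}^t n_{σ_l}`. -/
noncomputable def eppfEps (α p ε : ℝ) (n t : ℕ) (ns : Fin t → ℕ) : ℝ :=
  α ^ t * Real.Gamma α / Real.Gamma ((n : ℝ) + α) *
    (∏ j, (Nat.factorial (ns j) : ℝ)) *
    ∑ σ : Equiv.Perm (Fin t), ∏ j,
      (p + (1 - p) *
          incBeta ε (((∑ l ∈ Finset.Ioi j, ns (σ l) : ℕ) : ℝ) + α) ((ns (σ j) : ℝ) + 1)
          / ε ^ α) /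
      (((∑ l ∈ Finset.Ici j, ns (σ l) : ℕ) : ℝ) +
        α * (1 - p) * (1 - ε ^ (∑ l ∈ Finset.Ici j, ns (σ l))))

/-- The exchangeable partition probability function of the quasi-Bernoulli stick-breaking
process with `ε = 0` (a finite stick-breaking model with `Geometric(1-p)` number of
components and `Beta(1,α)` proportions):
`(α^t Γ(α)/Γ(n+α)) (∏_j n_j!) Σ_{σ∈S_t} ∏_j [p + 𝟙(j=t)(1-p)/(α B(α, n_{σ_t}+1))]
  / [g_j(σ)+α(1-p)]` where `g_j(σ) = Σ_{l=j}^t n_{σ_l}`. -/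
noncomputable def eppfZero (α p : ℝ) (n t : ℕ) (ns : Fin t → ℕ) : ℝ :=
  α ^ t * Real.Gamma α / Real.Gamma ((n : ℝ) + α) *
    (∏ j, (Nat.factorial (ns j) : ℝ)) *
    ∑ σ : Equiv.Perm (Fin t), ∏ j : Fin t,
      (p + (if j.val = t - 1 then
              (1 - p) / (α * betaFun α ((ns (σ j) : ℝ) + 1)) else 0)) /
      (((∑ l ∈ Finset.Ici j, ns (σ l) : ℕ) : ℝ) + α * (1 - p))

/-- `Pr_{ε,n}(𝒜)` for a set partition `𝒜` of `{1,…,n}` and `ε ∈ (0,1)`. -/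
noncomputable def PrEps (α p ε : ℝ) (n : ℕ) (P : SetPartition n) : ℝ :=
  eppfEps α p ε n P.1.card (blockSize P)

/-- `Pr_{0,n}(𝒜)` for a set partition `𝒜` of `{1,…,n}`. -/
noncomputable def PrZero (α p : ℝ) (n : ℕ) (P : SetPartition n) : ℝ :=
  eppfZero α p n P.1.card (blockSize P)

/-!
Both sides are `α^t Γ(α)/Γ(n+α) ∏ n_j!` times a sum over `σ` of a product of `t` factors
`N_j / D_j`, so it suffices to compare the factors one by one. For the denominators,
`G + q(1 - ε^G) ≥ (G + q)/(1 + qε)` with `q = α(1-p)`, since `ε^G ≤ ε`. For the numerators, the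
identity `c B(c, m+1) = m! / ∏_{j<m} (c+1+j)` and `∫_0^ε x^(c-1)(1-x)^m ≤ ε^c/c` give
`I_ε(g+α, m+1)/ε^α ≤ ε^g (m+1)^(g+1+r) ≤ ε^g K^(g+1+r)` with `K = 1 + n/(α-r)`, and this is
decreasing in `g` because `εK ≤ 1`. The tail sum `g` after the `j`-th block is `0` for the last
factor (whose numerator is then dominated by the `ε = 0` one), at least `1` for the penultimate
factor and at least `2` for all others; this produces the factor `1 + (1-p)/p ε K^(2+r)` once and
`1 + (1-p)/p ε² K^(3+r)` at most `n` times.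
-/

open Finset
open scoped Nat

lemma integral_rpow_mul_one_sub_pow_le {c ε : ℝ} (hc : 0 < c) (hε0 : 0 ≤ ε) (hε1 : ε ≤ 1)
    (m : ℕ) : ∫ x in (0:ℝ)..ε, x ^ (c - 1) * (1 - x) ^ (m : ℝ) ≤ ε ^ c / c := by
  calc ∫ x in (0:ℝ)..ε, x ^ (c - 1) * (1 - x) ^ (m : ℝ)
      ≤ ∫ x in (0:ℝ)..ε, x ^ (c - 1) := by
        rw [intervalIntegral.integral_of_le hε0, intervalIntegral.integral_of_le hε0]
        refine integral_mono_of_nonneg ?_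
          (intervalIntegral.intervalIntegrable_rpow' (by linarith)).1 ?_
        · filter_upwards [ae_restrict_mem measurableSet_Ioc] with x ⟨hx0, hxε⟩
          rw [Pi.zero_apply, Real.rpow_natCast]
          exact mul_nonneg (Real.rpow_nonneg hx0.le _) (pow_nonneg (by linarith) m)
        · filter_upwards [ae_restrict_mem measurableSet_Ioc] with x ⟨hx0, hxε⟩
          rw [Real.rpow_natCast]
          exact mul_le_of_le_one_right (Real.rpow_nonneg hx0.le _)
            (pow_le_one₀ (by linarith) (by linarith))
    _ = ε ^ c / c := by
        rw [integral_rpow (Or.inl (by linarith)), sub_add_cancel, Real.zero_rpow hc.ne', sub_zero]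

lemma betaFun_natCast_add_one {a : ℝ} (ha : 0 < a) (m : ℕ) :
    betaFun a (m + 1) = m ! / ∏ j ∈ range (m + 1), (a + j) := by
  have hB : ((betaFun a (m + 1) : ℝ) : ℂ) = Complex.betaIntegral a (m + 1) := by
    rw [Complex.betaIntegral, betaFun, ← intervalIntegral.integral_ofReal]
    refine intervalIntegral.integral_congr fun x ⟨hx0, hx1⟩ => ?_
    simp only [inf_of_le_left zero_le_one, sup_of_le_right zero_le_one] at hx0 hx1
    rw [Complex.ofReal_mul, Complex.ofReal_cpow hx0, Complex.ofReal_cpow (by linarith)]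
    push_cast
    ring_nf
  rw [Complex.betaIntegral_eval_nat_add_one_right (by simpa using ha)] at hB
  exact_mod_cast hB

lemma mul_betaFun_natCast_add_one {a : ℝ} (ha : 0 < a) (m : ℕ) :
    a * betaFun a (m + 1) = m ! / ∏ j ∈ range m, (a + 1 + j) := by
  have hprod : ∏ j ∈ range m, (a + 1 + j) ≠ 0 :=
    prod_ne_zero_iff.mpr fun j _ => by positivity
  rw [betaFun_natCast_add_one ha, prod_range_succ', Nat.cast_zero, add_zero]
  simp only [Nat.cast_add, Nat.cast_one, ← add_assoc, add_right_comm a]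
  field_simp

lemma ascFactorial_succ_le_factorial_mul_pow (k m : ℕ) :
    (k + 1).ascFactorial m ≤ m ! * (m + 1) ^ k := by
  have h := Nat.factorial_mul_ascFactorial k m
  rw [add_comm k m, ← Nat.factorial_mul_ascFactorial m k] at h
  have := Nat.ascFactorial_le_factorial_mul_pow (m + 1) k
  refine le_of_mul_le_mul_left ?_ (Nat.factorial_pos k)
  rw [h]
  calc m ! * (m + 1).ascFactorial k ≤ m ! * (k ! * (m + 1) ^ k) := Nat.mul_le_mul_left _ this
    _ = k ! * (m ! * (m + 1) ^ k) := by ring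

lemma prod_range_add_le_factorial_mul_pow {c : ℝ} {k : ℕ} (hc : 0 ≤ c) (hck : c ≤ k) (m : ℕ) :
    ∏ j ∈ range m, (c + 1 + j) ≤ m ! * ((m : ℝ) + 1) ^ k :=
  calc ∏ j ∈ range m, (c + 1 + j) ≤ ∏ j ∈ range m, ((k : ℝ) + 1 + j) :=
        prod_le_prod (fun j _ => by positivity) fun j _ => by linarith
    _ = (k + 1).ascFactorial m := by push_cast [Nat.ascFactorial_eq_prod_range]; rfl
    _ ≤ m ! * ((m : ℝ) + 1) ^ k := by exact_mod_cast ascFactorial_succ_le_factorial_mul_pow k m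

lemma betaFun_natCast_add_one_pos {a : ℝ} (ha : 0 < a) (m : ℕ) : 0 < betaFun a (m + 1) := by
  rw [betaFun_natCast_add_one ha]
  exact div_pos (by positivity) (prod_pos fun j _ => by positivity)

lemma incBeta_natCast_add_one_nonneg {c ε : ℝ} (hc : 0 < c) (hε0 : 0 ≤ ε) (hε1 : ε ≤ 1)
    (m : ℕ) : 0 ≤ incBeta ε c (m + 1) := by
  refine div_nonneg (intervalIntegral.integral_nonneg hε0 fun x ⟨hx0, hxε⟩ => ?_)
    (betaFun_natCast_add_one_pos hc m).le
  exact mul_nonneg (Real.rpow_nonneg hx0 _) (Real.rpow_nonneg (by linarith) _)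

lemma incBeta_natCast_add_one_le {c ε : ℝ} (hc : 0 < c) (hε0 : 0 ≤ ε) (hε1 : ε ≤ 1) (m : ℕ) :
    incBeta ε c (m + 1) ≤ ε ^ c / (c * betaFun c (m + 1)) := by
  rw [incBeta, add_sub_cancel_right, div_mul_eq_div_div]
  gcongr
  · exact (betaFun_natCast_add_one_pos hc m).le
  · exact integral_rpow_mul_one_sub_pow_le hc hε0 hε1 m

lemma incBeta_div_rpow_le {α ε : ℝ} {r : ℕ} (hα : 0 < α) (hαr : α ≤ r + 1) (hε0 : 0 < ε)
    (hε1 : ε ≤ 1) (g m : ℕ) :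
    incBeta ε (g + α) (m + 1) / ε ^ α ≤ ε ^ g * ((m : ℝ) + 1) ^ (g + 1 + r) := by
  have hc : (0 : ℝ) < g + α := by positivity
  calc incBeta ε (g + α) (m + 1) / ε ^ α
      ≤ ε ^ ((g : ℝ) + α) / ((g + α) * betaFun (g + α) (m + 1)) / ε ^ α := by
        gcongr; exact incBeta_natCast_add_one_le hc hε0.le hε1 m
    _ = ε ^ g * ((∏ j ∈ range m, ((g : ℝ) + α + 1 + j)) / m !) := by
        rw [mul_betaFun_natCast_add_one hc, Real.rpow_add hε0, Real.rpow_natCast]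
        field_simp
    _ ≤ ε ^ g * ((m : ℝ) + 1) ^ (g + 1 + r) := by
        gcongr
        rw [div_le_iff₀' (by positivity)]
        exact prod_range_add_le_factorial_mul_pow hc.le (by push_cast; linarith) m

lemma pow_mul_pow_add_le_of_le {ε K : ℝ} (hε : 0 ≤ ε) (hK : 1 ≤ K) (hεK : ε * K ≤ 1)
    {d g c : ℕ} (hdg : d ≤ g) : ε ^ g * K ^ (g + c) ≤ ε ^ d * K ^ (d + c) := by
  obtain ⟨s, rfl⟩ := Nat.exists_eq_add_of_le hdg
  calc ε ^ (d + s) * K ^ (d + s + c) = ε ^ d * K ^ (d + c) * (ε * K) ^ s := by ring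
    _ ≤ ε ^ d * K ^ (d + c) :=
        mul_le_of_le_one_right (by positivity) (pow_le_one₀ (by positivity) hεK)

lemma natCast_add_le_mul_one_add {q ε : ℝ} (hq : 0 ≤ q) (hε0 : 0 ≤ ε) (hε1 : ε ≤ 1) {G : ℕ}
    (hG : 1 ≤ G) : (G : ℝ) + q ≤ (G + q * (1 - ε ^ G)) * (1 + q * ε) := by
  have hεG : ε ^ G ≤ ε := pow_le_of_le_one hε0 hε1 (by omega)
  have hG' : (1 : ℝ) ≤ G := by exact_mod_cast hG
  nlinarith [mul_nonneg hq (mul_nonneg hε0 (sub_nonneg.mpr hG')),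
    mul_nonneg (mul_nonneg hq hq) (mul_nonneg hε0 (sub_nonneg.mpr (hεG.trans hε1)))]

lemma epsNumerator_le_pow_mul_pow {α p ε K : ℝ} {r n : ℕ} (hα : 0 < α)
    (hp : p ∈ Set.Ioo (0 : ℝ) 1) (hαr : α ≤ r + 1) (hε0 : 0 < ε) (hK : (n : ℝ) + 1 ≤ K)
    (hεK : ε * K ≤ 1) {d g m : ℕ} (hdg : d ≤ g) (hm : m ≤ n) :
    p + (1 - p) * incBeta ε (g + α) (m + 1) / ε ^ α ≤
      (1 + (1 - p) / p * ε ^ d * K ^ (d + 1 + r)) * p := by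
  have hK1 : 1 ≤ K := by linarith [(Nat.cast_nonneg n : (0 : ℝ) ≤ n)]
  have hmK : (m : ℝ) + 1 ≤ K := by linarith [(Nat.cast_le.mpr hm : (m : ℝ) ≤ n)]
  have hε1 : ε ≤ 1 := by nlinarith
  have hX : incBeta ε (g + α) (m + 1) / ε ^ α ≤ ε ^ d * K ^ (d + 1 + r) :=
    calc incBeta ε (g + α) (m + 1) / ε ^ α ≤ ε ^ g * ((m : ℝ) + 1) ^ (g + 1 + r) :=
          incBeta_div_rpow_le hα hαr hε0 hε1 g m
      _ ≤ ε ^ g * K ^ (g + (1 + r)) := by rw [← add_assoc]; gcongr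
      _ ≤ ε ^ d * K ^ (d + 1 + r) := by
          rw [add_assoc d]; exact pow_mul_pow_add_le_of_le hε0.le hK1 hεK hdg
  calc p + (1 - p) * incBeta ε (g + α) (m + 1) / ε ^ α
      ≤ p + (1 - p) * (ε ^ d * K ^ (d + 1 + r)) := by
        rw [mul_div_assoc]; gcongr; linarith [hp.2]
    _ = (1 + (1 - p) / p * ε ^ d * K ^ (d + 1 + r)) * p := by field_simp [hp.1.ne']

lemma epsNumerator_le_of_tail_zero {α p ε : ℝ} (hα : 0 < α) (hp1 : p < 1) (hε0 : 0 < ε)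
    (hε1 : ε ≤ 1) (m : ℕ) :
    p + (1 - p) * incBeta ε ((0 : ℕ) + α) (m + 1) / ε ^ α ≤
      p + (1 - p) / (α * betaFun α (m + 1)) := by
  have hεα : 0 < ε ^ α := Real.rpow_pos_of_pos hε0 α
  have hX : incBeta ε α (m + 1) / ε ^ α ≤ 1 / (α * betaFun α (m + 1)) := by
    rw [div_le_iff₀ hεα]
    exact (incBeta_natCast_add_one_le hα hε0.le hε1 m).trans_eq (by ring)
  calc p + (1 - p) * incBeta ε ((0 : ℕ) + α) (m + 1) / ε ^ α
      = p + (1 - p) * (incBeta ε α (m + 1) / ε ^ α) := by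
        rw [Nat.cast_zero, zero_add, mul_div_assoc]
    _ ≤ p + (1 - p) * (1 / (α * betaFun α (m + 1))) := by gcongr
    _ = p + (1 - p) / (α * betaFun α (m + 1)) := by rw [mul_one_div]

noncomputable def eppfEpsFactor (α p ε : ℝ) {t : ℕ} (s : Fin t → ℕ) (j : Fin t) : ℝ :=
  (p + (1 - p) * incBeta ε (((∑ l ∈ Ioi j, s l : ℕ) : ℝ) + α) ((s j : ℝ) + 1) / ε ^ α) /
    (((∑ l ∈ Ici j, s l : ℕ) : ℝ) + α * (1 - p) * (1 - ε ^ (∑ l ∈ Ici j, s l)))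

noncomputable def eppfZeroFactor (α p : ℝ) {t : ℕ} (s : Fin t → ℕ) (j : Fin t) : ℝ :=
  (p + (if j.val = t - 1 then (1 - p) / (α * betaFun α ((s j : ℝ) + 1)) else 0)) /
    (((∑ l ∈ Ici j, s l : ℕ) : ℝ) + α * (1 - p))

lemma eppfEps_le_mul_eppfZero {α p ε M : ℝ} {n t : ℕ} {ns : Fin t → ℕ} (hα : 0 < α)
    (h : ∀ σ : Equiv.Perm (Fin t),
      ∏ j, eppfEpsFactor α p ε (ns ∘ σ) j ≤ M * ∏ j, eppfZeroFactor α p (ns ∘ σ) j) :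
    eppfEps α p ε n t ns ≤ M * eppfZero α p n t ns := by
  have hC : 0 ≤ α ^ t * Real.Gamma α / Real.Gamma (n + α) * ∏ j, ((ns j)! : ℝ) := by
    have := Real.Gamma_pos_of_pos hα
    have := Real.Gamma_pos_of_pos (by positivity : (0 : ℝ) < n + α)
    positivity
  rw [eppfEps, eppfZero, mul_left_comm M, mul_sum _ _ M]
  exact mul_le_mul_of_nonneg_left (sum_le_sum fun σ _ => h σ) hC

lemma div_le_mul_div_of_le_of_le_mul {a b c d e : ℝ} (hb : 0 < b) (hd : 0 < d) (hc : 0 ≤ c)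
    (hac : a ≤ c) (hdbe : d ≤ b * e) : a / b ≤ e * (c / d) := by
  rw [mul_div_assoc', div_le_div_iff₀ hb hd]
  nlinarith [mul_le_mul_of_nonneg_left hdbe hc]

lemma prod_ite_val_eq_le {t n c : ℕ} (htn : t ≤ n) {a b : ℝ} (ha : 1 ≤ a) (hb : 1 ≤ b) :
    ∏ j : Fin t, (if j.val = c then a else b) ≤ a * b ^ n := by
  rw [prod_ite, prod_const, prod_const]
  have hc : #{j : Fin t | j.val = c} ≤ 1 :=
    card_le_one.mpr fun i hi k hk => Fin.ext (by simp only [mem_filter] at hi hk; omega)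
  have hnc : #{j : Fin t | ¬j.val = c} ≤ n := (card_le_univ _).trans (by simpa using htn)
  gcongr
  exact (pow_le_pow_right₀ ha hc).trans_eq (pow_one a)

lemma one_le_one_add_div_mul_mul {p x y : ℝ} (hp : p ∈ Set.Ioo (0 : ℝ) 1) (hx : 0 ≤ x)
    (hy : 0 ≤ y) : 1 ≤ 1 + (1 - p) / p * x * y :=
  le_add_of_nonneg_right <| mul_nonneg (mul_nonneg (div_nonneg (by linarith [hp.2]) hp.1.le) hx) hy

noncomputable def growthFactor (p ε K : ℝ) (r : ℕ) {t : ℕ} (j : Fin t) : ℝ :=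
  if j.val = t - 2 then 1 + (1 - p) / p * ε * K ^ (2 + r)
  else 1 + (1 - p) / p * ε ^ 2 * K ^ (3 + r)

lemma one_le_growthFactor {p ε K : ℝ} {r t : ℕ} (hp : p ∈ Set.Ioo (0 : ℝ) 1) (hε : 0 ≤ ε)
    (hK : 0 ≤ K) (j : Fin t) : 1 ≤ growthFactor p ε K r j := by
  unfold growthFactor
  split_ifs
  · exact one_le_one_add_div_mul_mul hp hε (by positivity)
  · exact one_le_one_add_div_mul_mul hp (by positivity) (by positivity)

section Factors

variable {t : ℕ} {s : Fin t → ℕ}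

lemma card_sub_le_sum_Ioi (hs : ∀ j, 1 ≤ s j) (j : Fin t) : t - 1 - j ≤ ∑ l ∈ Ioi j, s l := by
  rw [← Fin.card_Ioi, card_eq_sum_ones]
  exact sum_le_sum fun l _ => hs l

lemma sum_Ioi_eq_zero_of_last {j : Fin t} (hj : j.val = t - 1) : ∑ l ∈ Ioi j, s l = 0 := by
  have hempty : Ioi j = ∅ := Finset.card_eq_zero.mp (by rw [Fin.card_Ioi]; omega)
  rw [hempty, sum_empty]

lemma one_le_sum_Ici (hs : ∀ j, 1 ≤ s j) (j : Fin t) : 1 ≤ ∑ l ∈ Ici j, s l :=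
  (hs j).trans (single_le_sum (fun _ _ => Nat.zero_le _) (mem_Ici.mpr le_rfl))

variable {α p ε q : ℝ}

lemma eppfZeroFactor_nonneg (hα : 0 < α) (hp : p ∈ Set.Ioo (0 : ℝ) 1) (j : Fin t) :
    0 ≤ eppfZeroFactor α p s j := by
  obtain ⟨hp0, hp1⟩ := hp
  have := betaFun_natCast_add_one_pos hα (s j)
  have : 0 < 1 - p := by linarith
  unfold eppfZeroFactor
  split_ifs <;> positivity

lemma epsNumerator_nonneg (hα : 0 < α) (hp : p ∈ Set.Ioo (0 : ℝ) 1) (hε0 : 0 < ε)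
    (hε1 : ε ≤ 1) (j : Fin t) :
    0 ≤ p + (1 - p) * incBeta ε (((∑ l ∈ Ioi j, s l : ℕ) : ℝ) + α) ((s j : ℝ) + 1) / ε ^ α :=
  add_nonneg hp.1.le <| div_nonneg
    (mul_nonneg (sub_nonneg.mpr hp.2.le)
      (incBeta_natCast_add_one_nonneg (by positivity) hε0.le hε1 _))
    (Real.rpow_nonneg hε0.le α)

lemma epsDenominator_pos (hq : 0 ≤ q) (hε0 : 0 ≤ ε) (hε1 : ε ≤ 1) (hs : ∀ j, 1 ≤ s j) (j : Fin t) :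
    0 < ((∑ l ∈ Ici j, s l : ℕ) : ℝ) + q * (1 - ε ^ (∑ l ∈ Ici j, s l)) := by
  have : (1 : ℝ) ≤ (∑ l ∈ Ici j, s l : ℕ) := by exact_mod_cast one_le_sum_Ici hs j
  have : 0 ≤ q * (1 - ε ^ (∑ l ∈ Ici j, s l)) :=
    mul_nonneg hq (sub_nonneg.mpr (pow_le_one₀ hε0 hε1))
  linarith

lemma eppfEpsFactor_nonneg (hα : 0 < α) (hp : p ∈ Set.Ioo (0 : ℝ) 1) (hε0 : 0 < ε)
    (hε1 : ε ≤ 1) (hs : ∀ j, 1 ≤ s j) (j : Fin t) : 0 ≤ eppfEpsFactor α p ε s j :=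
  div_nonneg (epsNumerator_nonneg hα hp hε0 hε1 j)
    (epsDenominator_pos (mul_nonneg hα.le (sub_nonneg.mpr hp.2.le)) hε0.le hε1 hs j).le

lemma epsNumerator_le {K : ℝ} {r n : ℕ} (hα : 0 < α) (hp : p ∈ Set.Ioo (0 : ℝ) 1)
    (hαr : α ≤ r + 1) (hε0 : 0 < ε) (hK : (n : ℝ) + 1 ≤ K) (hεK : ε * K ≤ 1)
    (hs1 : ∀ j, 1 ≤ s j) (hsn : ∀ j, s j ≤ n) (j : Fin t) :
    p + (1 - p) * incBeta ε (((∑ l ∈ Ioi j, s l : ℕ) : ℝ) + α) ((s j : ℝ) + 1) / ε ^ α ≤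
      growthFactor p ε K r j *
      (p + if j.val = t - 1 then (1 - p) / (α * betaFun α ((s j : ℝ) + 1)) else 0) := by
  by_cases hlast : j.val = t - 1
  · have hK0 : 0 ≤ K := by linarith [(Nat.cast_nonneg n : (0 : ℝ) ≤ n)]
    have hε1 : ε ≤ 1 := by nlinarith
    have := betaFun_natCast_add_one_pos hα (s j)
    have : 0 < 1 - p := sub_pos.mpr hp.2
    have := hp.1
    rw [if_pos hlast, sum_Ioi_eq_zero_of_last hlast]
    exact (epsNumerator_le_of_tail_zero hα hp.2 hε0 hε1 (s j)).trans
      (le_mul_of_one_le_left (by positivity) (one_le_growthFactor hp hε0.le hK0 j))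
  have hg := card_sub_le_sum_Ioi hs1 j
  rw [if_neg hlast, add_zero]
  by_cases hpen : j.val = t - 2
  · have := epsNumerator_le_pow_mul_pow (d := 1) (g := ∑ l ∈ Ioi j, s l) hα hp hαr hε0 hK hεK
      (by omega) (hsn j)
    rw [growthFactor, if_pos hpen]
    rwa [pow_one] at this
  · have := epsNumerator_le_pow_mul_pow (d := 2) (g := ∑ l ∈ Ioi j, s l) hα hp hαr hε0 hK hεK
      (by omega) (hsn j)
    rwa [growthFactor, if_neg hpen]

lemma eppfEpsFactor_le {K : ℝ} {r n : ℕ} (hα : 0 < α) (hp : p ∈ Set.Ioo (0 : ℝ) 1)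
    (hαr : α ≤ r + 1) (hε0 : 0 < ε) (hK : (n : ℝ) + 1 ≤ K) (hεK : ε * K ≤ 1)
    (hs1 : ∀ j, 1 ≤ s j) (hsn : ∀ j, s j ≤ n) (j : Fin t) :
    eppfEpsFactor α p ε s j ≤ (1 + α * (1 - p) * ε) *
      growthFactor p ε K r j * eppfZeroFactor α p s j := by
  have hε1 : ε ≤ 1 := by nlinarith [(Nat.cast_nonneg n : (0 : ℝ) ≤ n)]
  have hq : 0 ≤ α * (1 - p) := mul_nonneg hα.le (sub_nonneg.mpr hp.2.le)
  have hnum := epsNumerator_le hα hp hαr hε0 hK hεK hs1 hsn j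
  have hnum0 := (epsNumerator_nonneg hα hp hε0 hε1 j).trans hnum
  have hden := natCast_add_le_mul_one_add hq hε0.le hε1 (one_le_sum_Ici hs1 j)
  have hDε := epsDenominator_pos hq hε0.le hε1 hs1 j
  have hD₀ : 0 < ((∑ l ∈ Ici j, s l : ℕ) : ℝ) + α * (1 - p) := by
    have := one_le_sum_Ici hs1 j
    positivity
  unfold eppfEpsFactor eppfZeroFactor
  exact (div_le_mul_div_of_le_of_le_mul hDε hD₀ hnum0 hnum hden).trans_eq (by ring)

lemma prod_eppfEpsFactor_le {K : ℝ} {r n : ℕ} (hα : 0 < α) (hp : p ∈ Set.Ioo (0 : ℝ) 1)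
    (hαr : α ≤ r + 1) (hε0 : 0 < ε) (hK : (n : ℝ) + 1 ≤ K) (hεK : ε * K ≤ 1) (htn : t ≤ n)
    (hs1 : ∀ j, 1 ≤ s j) (hsn : ∀ j, s j ≤ n) :
    ∏ j, eppfEpsFactor α p ε s j ≤
      (1 + α * (1 - p) * ε) ^ n * (1 + (1 - p) / p * ε ^ 2 * K ^ (3 + r)) ^ n *
        (1 + (1 - p) / p * ε * K ^ (2 + r)) * ∏ j, eppfZeroFactor α p s j := by
  have hK0 : 0 ≤ K := by linarith [(Nat.cast_nonneg n : (0 : ℝ) ≤ n)]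
  have hε1 : ε ≤ 1 := by nlinarith
  have hB : 0 ≤ ∏ j, eppfZeroFactor α p s j :=
    prod_nonneg fun j _ => eppfZeroFactor_nonneg hα hp j
  calc ∏ j, eppfEpsFactor α p ε s j
      ≤ ∏ j, (1 + α * (1 - p) * ε) * growthFactor p ε K r j * eppfZeroFactor α p s j :=
        prod_le_prod (fun j _ => eppfEpsFactor_nonneg hα hp hε0 hε1 hs1 j)
          fun j _ => eppfEpsFactor_le hα hp hαr hε0 hK hεK hs1 hsn j
    _ = (1 + α * (1 - p) * ε) ^ t * (∏ j, growthFactor p ε K r j) *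
          ∏ j, eppfZeroFactor α p s j := by
        rw [prod_mul_distrib, prod_mul_distrib, prod_const, card_univ, Fintype.card_fin]
    _ ≤ (1 + α * (1 - p) * ε) ^ n * ((1 + (1 - p) / p * ε * K ^ (2 + r)) *
          (1 + (1 - p) / p * ε ^ 2 * K ^ (3 + r)) ^ n) * ∏ j, eppfZeroFactor α p s j := by
        have : 0 ≤ α * (1 - p) * ε := mul_nonneg (mul_nonneg hα.le (sub_nonneg.mpr hp.2.le)) hε0.le
        gcongr
        · exact prod_nonneg fun j _ => zero_le_one.trans (one_le_growthFactor hp hε0.le hK0 j)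
        · linarith
        · exact prod_ite_val_eq_le htn (one_le_one_add_div_mul_mul hp hε0.le (by positivity))
            (one_le_one_add_div_mul_mul hp (by positivity) (by positivity))
    _ = _ := by ring

end Factors

lemma blockSize_pos {n : ℕ} (P : SetPartition n) (j : Fin P.1.card) : 1 ≤ blockSize P j :=
  card_pos.mpr <| nonempty_iff_ne_empty.mpr fun h =>
    P.2.1 (h ▸ ((Fintype.equivFinOfCardEq (Fintype.card_coe P.1)).symm j).2)

lemma blockSize_le {n : ℕ} (P : SetPartition n) (j : Fin P.1.card) : blockSize P j ≤ n :=
  (card_le_univ _).trans_eq (Fintype.card_fin n)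

lemma card_le_of_isSetPartition {n : ℕ} {P : Finset (Finset (Fin n))} (hP : IsSetPartition n P) :
    #P ≤ n := by
  have hdisj : (P : Set (Finset (Fin n))).PairwiseDisjoint id := by
    intro A hA B hB hAB
    refine disjoint_left.mpr fun i hiA hiB => hAB ?_
    obtain ⟨U, -, hU⟩ := hP.2 i
    exact (hU A ⟨hA, hiA⟩).trans (hU B ⟨hB, hiB⟩).symm
  calc #P ≤ #(P.biUnion id) :=
        card_le_card_biUnion hdisj fun A hA => nonempty_iff_ne_empty.mpr fun h => hP.1 (h ▸ hA)
    _ ≤ n := (card_le_univ _).trans_eq (Fintype.card_fin n)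

theorem stmt19_general (α p : ℝ) (hα : 0 < α) (hp : p ∈ Set.Ioo (0:ℝ) 1)
    (r : ℕ) (hr1 : 0 < α - r) (hr2 : α - r ≤ 1)
    (n : ℕ) (ε : ℝ) (hε : ε ∈ Set.Ioo (0:ℝ) 1)
    (hεn : ε * (1 + n / (α - r)) < 1) (P : SetPartition n) :
    PrEps α p ε n P ≤
      (1 + α * (1 - p) * ε) ^ n *
        (1 + (1 - p) / p * ε ^ 2 * (1 + n / (α - r)) ^ (3 + r)) ^ n *
        (1 + (1 - p) / p * ε * (1 + n / (α - r)) ^ (2 + r)) *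
        PrZero α p n P := by
  have hK : (n : ℝ) + 1 ≤ 1 + n / (α - r) := by
    rw [add_comm, add_le_add_iff_left, le_div_iff₀ hr1]
    exact mul_le_of_le_one_right (Nat.cast_nonneg n) hr2
  exact eppfEps_le_mul_eppfZero hα fun σ =>
    prod_eppfEpsFactor_le hα hp (by linarith) hε.1 hK hεn.le (card_le_of_isSetPartition P.2)
      (fun j => blockSize_pos P (σ j)) fun j => blockSize_le P (σ j)

/-- Upper ratio bound between the quasi-Bernoulli partition distributions: with `r` the
nonnegative integer such that `0 < α - r ≤ 1`, if `ε (1 + n/(α-r)) < 1` then for every set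
partition `𝒜` of `{1,…,n}`,
`Pr_{ε,n}(𝒜) ≤ (1+α(1-p)ε)^n (1 + ((1-p)/p) ε² (1+n/(α-r))^{3+r})^n
  (1 + ((1-p)/p) ε (1+n/(α-r))^{2+r}) Pr_{0,n}(𝒜)`. -/
theorem stmt19 (α p : ℝ) (hα : 0 < α) (hp : p ∈ Set.Ioo (0:ℝ) 1)
    (r : ℕ) (hr1 : 0 < α - r) (hr2 : α - r ≤ 1)
    (n : ℕ) (hn : 1 ≤ n) (ε : ℝ) (hε : ε ∈ Set.Ioo (0:ℝ) 1)
    (hεn : ε * (1 + n / (α - r)) < 1) (P : SetPartition n) :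
    PrEps α p ε n P ≤
      (1 + α * (1 - p) * ε) ^ n *
        (1 + (1 - p) / p * ε ^ 2 * (1 + n / (α - r)) ^ (3 + r)) ^ n *
        (1 + (1 - p) / p * ε * (1 + n / (α - r)) ^ (2 + r)) *
        PrZero α p n P :=
  stmt19_general α p hα hp r hr1 hr2 n ε hε hεn P
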